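/- arXiv:math/0409491 — 3 statements merged into one kernel-verified Lean document; each statement's English description precedes it below -/
import Mathlib

section
/- Fix 0 < a < b < ∞. For all u, v ∈ [a,b]^N, (a^{N−1}/√N)·‖u−v‖ ≤ (∏_{j=1}^N u_j) + (∏_{j=1}^N v_j) − 2·∏_{j=1}^N min(u_j,v_j) ≤ N·b^{N−1}·‖u−v‖. -/
/-!
Write `m = min u v` coordinatewise. The middle quantity is `(∏ u - ∏ m) + (∏ v - ∏ m)`, and
`(u j - m j) + (v j - m j) = |u j - v j|`. Changing one coordinate at a time, `∏ u - ∏ m` is a sum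
of the increments `u j - m j`, each multiplied by a product of `N - 1` numbers from `[a, b]`; so the
middle quantity lies between `a ^ (N - 1)` and `b ^ (N - 1)` times the `ℓ¹` distance of `u` and `v`.
This distance is compared with the Euclidean one through `‖x‖ ≤ ‖x‖₁ ≤ N ‖x‖`.
-/

open Finset

section OrderedRing

variable {R : Type*} [CommRing R] [LinearOrder R] [IsStrictOrderedRing R] {n : ℕ} {a b : R}
  {u w : Fin (n + 1) → R}

theorem pow_mul_sum_sub_le_prod_sub_prod (ha : 0 ≤ a) (haw : ∀ i, a ≤ w i) (hwu : ∀ i, w i ≤ u i) :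
    a ^ n * ∑ i, (u i - w i) ≤ ∏ i, u i - ∏ i, w i := by
  induction n with
  | zero => simp [univ_unique]
  | succ n ih =>
    have ih' := ih (u := fun i => u i.succ) (w := fun i => w i.succ) (fun i => haw _) (fun i => hwu _)
    have hw' : a ^ (n + 1) ≤ ∏ i : Fin (n + 1), w i.succ := by
      simpa using prod_le_prod (s := univ) (fun _ _ => ha) (fun (i : Fin (n + 1)) _ => haw i.succ)
    have hS : 0 ≤ ∑ i : Fin (n + 1), (u i.succ - w i.succ) :=
      sum_nonneg fun i _ => sub_nonneg.2 (hwu _)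
    rw [Fin.prod_univ_succ u, Fin.prod_univ_succ w, Fin.sum_univ_succ]
    calc a ^ (n + 1) * (u 0 - w 0 + ∑ i : Fin (n + 1), (u i.succ - w i.succ))
        = (u 0 - w 0) * a ^ (n + 1) + a * (a ^ n * ∑ i : Fin (n + 1), (u i.succ - w i.succ)) := by
          ring
      _ ≤ (u 0 - w 0) * ∏ i : Fin (n + 1), w i.succ
            + u 0 * (∏ i : Fin (n + 1), u i.succ - ∏ i : Fin (n + 1), w i.succ) := by
          have hau : a ≤ u 0 := (haw 0).trans (hwu 0)
          exact add_le_add (mul_le_mul_of_nonneg_left hw' (sub_nonneg.2 (hwu 0)))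
            (mul_le_mul hau ih' (mul_nonneg (pow_nonneg ha n) hS) (ha.trans hau))
      _ = u 0 * ∏ i : Fin (n + 1), u i.succ - w 0 * ∏ i : Fin (n + 1), w i.succ := by ring

theorem prod_sub_prod_le_pow_mul_sum (hw : ∀ i, 0 ≤ w i) (hwu : ∀ i, w i ≤ u i) (hub : ∀ i, u i ≤ b) :
    ∏ i, u i - ∏ i, w i ≤ b ^ n * ∑ i, (u i - w i) := by
  induction n with
  | zero => simp [univ_unique]
  | succ n ih =>
    have ih' := ih (u := fun i => u i.succ) (w := fun i => w i.succ) (fun i => hw _) (fun i => hwu _)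
      (fun i => hub _)
    have hb : 0 ≤ b := (hw 0).trans ((hwu 0).trans (hub 0))
    have hw' : ∏ i : Fin (n + 1), w i.succ ≤ b ^ (n + 1) := by
      simpa using prod_le_prod (s := univ) (fun (i : Fin (n + 1)) _ => hw i.succ)
        (fun (i : Fin (n + 1)) _ => (hwu _).trans (hub i.succ))
    have hprod : 0 ≤ ∏ i : Fin (n + 1), u i.succ - ∏ i : Fin (n + 1), w i.succ :=
      sub_nonneg.2 (prod_le_prod (fun i _ => hw _) (fun i _ => hwu _))
    rw [Fin.prod_univ_succ u, Fin.prod_univ_succ w, Fin.sum_univ_succ]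
    calc u 0 * ∏ i : Fin (n + 1), u i.succ - w 0 * ∏ i : Fin (n + 1), w i.succ
        = (u 0 - w 0) * ∏ i : Fin (n + 1), w i.succ
            + u 0 * (∏ i : Fin (n + 1), u i.succ - ∏ i : Fin (n + 1), w i.succ) := by ring
      _ ≤ (u 0 - w 0) * b ^ (n + 1) + b * (b ^ n * ∑ i : Fin (n + 1), (u i.succ - w i.succ)) :=
          add_le_add (mul_le_mul_of_nonneg_left hw' (sub_nonneg.2 (hwu 0)))
            (mul_le_mul (hub 0) ih' hprod hb)
      _ = b ^ (n + 1) * (u 0 - w 0 + ∑ i : Fin (n + 1), (u i.succ - w i.succ)) := by ring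

theorem prod_add_prod_sub_two_mul_prod_min_mem_Icc {v : Fin (n + 1) → R} (ha : 0 ≤ a)
    (hu : ∀ i, u i ∈ Set.Icc a b) (hv : ∀ i, v i ∈ Set.Icc a b) :
    (∏ i, u i) + (∏ i, v i) - 2 * ∏ i, min (u i) (v i) ∈
      Set.Icc (a ^ n * ∑ i, |u i - v i|) (b ^ n * ∑ i, |u i - v i|) := by
  have haw (i) : a ≤ min (u i) (v i) := le_min (hu i).1 (hv i).1
  have hm (i) : 0 ≤ min (u i) (v i) := ha.trans (haw i)
  have hsum : ∑ i, |u i - v i| =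
      ∑ i, (u i - min (u i) (v i)) + ∑ i, (v i - min (u i) (v i)) := by
    rw [← sum_add_distrib]
    refine sum_congr rfl fun i _ => ?_
    rw [abs_sub_comm, ← max_sub_min_eq_abs]
    linarith [min_add_max (u i) (v i)]
  rw [hsum, mul_add, mul_add, show ∀ x y z : R, x + y - 2 * z = (x - z) + (y - z) by intros; ring]
  exact ⟨add_le_add
    (pow_mul_sum_sub_le_prod_sub_prod ha haw fun i => min_le_left _ _)
    (pow_mul_sum_sub_le_prod_sub_prod ha haw fun i => min_le_right _ _),
    add_le_add
    (prod_sub_prod_le_pow_mul_sum hm (fun i => min_le_left _ _) fun i => (hu i).2)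
    (prod_sub_prod_le_pow_mul_sum hm (fun i => min_le_right _ _) fun i => (hv i).2)⟩

end OrderedRing

namespace EuclideanSpace

variable {ι : Type*} [Fintype ι]

theorem norm_le_sum_abs (x : EuclideanSpace ℝ ι) : ‖x‖ ≤ ∑ i, |x i| := by
  rw [EuclideanSpace.norm_eq, Real.sqrt_le_left (sum_nonneg fun i _ => abs_nonneg _)]
  simpa only [Real.norm_eq_abs] using sum_sq_le_sq_sum_of_nonneg fun i _ => abs_nonneg (x i)

theorem sum_abs_le_card_mul_norm (x : EuclideanSpace ℝ ι) : ∑ i, |x i| ≤ Fintype.card ι * ‖x‖ := by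
  simpa using sum_le_card_nsmul univ _ _ fun i _ => PiLp.norm_apply_le x i

end EuclideanSpace

theorem stmt_3_general (N : ℕ) (a b : ℝ) (ha : 0 < a)
    (u v : EuclideanSpace ℝ (Fin N))
    (hu : ∀ j, u j ∈ Set.Icc a b) (hv : ∀ j, v j ∈ Set.Icc a b) :
    a ^ (N - 1) / Real.sqrt N * ‖u - v‖ ≤
      (∏ j, u j) + (∏ j, v j) - 2 * ∏ j, min (u j) (v j) ∧
    (∏ j, u j) + (∏ j, v j) - 2 * (∏ j, min (u j) (v j)) ≤
      (N : ℝ) * b ^ (N - 1) * ‖u - v‖ := by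
  cases N with
  | zero => norm_num
  | succ n =>
    rw [Nat.add_sub_cancel]
    obtain ⟨hlow, hup⟩ := prod_add_prod_sub_two_mul_prod_min_mem_Icc ha.le hu hv
    simp only [← PiLp.sub_apply] at hlow hup
    refine ⟨le_trans ?_ hlow, hup.trans ?_⟩
    · calc a ^ n / Real.sqrt (n + 1 : ℕ) * ‖u - v‖ ≤ a ^ n * ‖u - v‖ := by
            gcongr
            exact div_le_self (pow_nonneg ha.le n) (Real.one_le_sqrt.2 (by simp))
        _ ≤ a ^ n * ∑ j, |(u - v) j| := by gcongr; exact EuclideanSpace.norm_le_sum_abs _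
    · have hb : 0 ≤ b := ha.le.trans ((hu 0).1.trans (hu 0).2)
      calc b ^ n * ∑ j, |(u - v) j| ≤ b ^ n * ((n + 1 : ℕ) * ‖u - v‖) := by
            gcongr
            simpa using EuclideanSpace.sum_abs_le_card_mul_norm (u - v)
        _ = _ := by ring

theorem stmt_3 (N : ℕ) (hN : 1 ≤ N) (a b : ℝ) (ha : 0 < a) (hab : a < b)
    (u v : EuclideanSpace ℝ (Fin N))
    (hu : ∀ j, u j ∈ Set.Icc a b) (hv : ∀ j, v j ∈ Set.Icc a b) :
    a ^ (N - 1) / Real.sqrt N * ‖u - v‖ ≤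
      (∏ j, u j) + (∏ j, v j) - 2 * ∏ j, min (u j) (v j) ∧
    (∏ j, u j) + (∏ j, v j) - 2 * (∏ j, min (u j) (v j)) ≤
      (N : ℝ) * b ^ (N - 1) * ‖u - v‖ :=
  stmt_3_general N a b ha u v hu hv
end

section
/- Let Y be a centered one-dimensional Gaussian random variable with variance σ² > 0, and let α, β > 0. If ε ≤ βσ then for every x with |x| ≤ ασ, P{|Y − x| ≤ ε} ≥ e^{−α²/2 − αβ}·P{|Y| ≤ ε}; if ε > βσ then P{|Y − x| ≤ ε} ≥ √(2/π)·β·e^{−(α+β)²/2}. -/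
/-!
If `ε ≤ βσ`, translating the window `[-ε, ε]` by `x` costs at most the factor
`e^{-α²/2 - αβ}` pointwise in the density, because `(y + x)² ≤ y² + (α² + 2αβ)σ²` when
`|x| ≤ ασ` and `|y| ≤ βσ`. If `ε > βσ`, the window around `x` contains `[x - βσ, x + βσ]`,
on which `|y| ≤ (α + β)σ`, so the density is at least `e^{-(α+β)²/2} / (σ√(2π))`; multiplying
by the length `2βσ` gives `√(2/π) β e^{-(α+β)²/2}`.
-/

open MeasureTheory ProbabilityTheory
open scoped NNReal ENNReal

namespace ProbabilityTheory

lemma exp_mul_gaussianPDFReal_le {μ μ' c y : ℝ} {v : ℝ≥0}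
    (h : (y - μ') ^ 2 ≤ (y - μ) ^ 2 - 2 * v * c) :
    Real.exp c * gaussianPDFReal μ v y ≤ gaussianPDFReal μ' v y := by
  rcases eq_or_ne v 0 with rfl | hv
  · simp
  have hv' : (0 : ℝ) < v := by positivity
  rw [gaussianPDFReal, gaussianPDFReal, mul_left_comm, ← Real.exp_add]
  gcongr
  rw [show c + -(y - μ) ^ 2 / (2 * v) = -((y - μ) ^ 2 - 2 * v * c) / (2 * v) by
    field_simp; ring]
  gcongr

lemma gaussianPDFReal_ge_of_sq_le {μ r y : ℝ} {v : ℝ≥0} (h : (y - μ) ^ 2 ≤ r ^ 2 * v) :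
    (√(2 * Real.pi * v))⁻¹ * Real.exp (-r ^ 2 / 2) ≤ gaussianPDFReal μ v y := by
  rcases eq_or_ne v 0 with rfl | hv
  · simp
  have hv' : (0 : ℝ) < v := by positivity
  rw [gaussianPDFReal]
  gcongr 1
  refine Real.exp_le_exp.mpr ?_
  rw [div_le_div_iff₀ two_pos (by positivity)]
  nlinarith

lemma ofReal_mul_gaussianReal_le {μ μ' c : ℝ} {v v' : ℝ≥0} (hv : v ≠ 0) (hv' : v' ≠ 0)
    {s : Set ℝ} (h : ∀ y ∈ s, c * gaussianPDFReal μ v y ≤ gaussianPDFReal μ' v' y) :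
    ENNReal.ofReal c * gaussianReal μ v s ≤ gaussianReal μ' v' s := by
  rw [gaussianReal_apply _ hv, gaussianReal_apply _ hv', ← lintegral_const_mul' _ _
    ENNReal.ofReal_ne_top]
  refine setLIntegral_mono (measurable_gaussianPDF _ _) fun y hy => ?_
  rw [gaussianPDF, gaussianPDF, ← ENNReal.ofReal_mul' (gaussianPDFReal_nonneg _ _ _)]
  exact ENNReal.ofReal_le_ofReal (h y hy)

lemma ofReal_mul_volume_le_gaussianReal {μ c : ℝ} {v : ℝ≥0} (hv : v ≠ 0) {s : Set ℝ}
    (h : ∀ y ∈ s, c ≤ gaussianPDFReal μ v y) :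
    ENNReal.ofReal c * volume s ≤ gaussianReal μ v s := by
  rw [gaussianReal_apply _ hv, ← setLIntegral_const]
  exact setLIntegral_mono (measurable_gaussianPDF _ _) fun y hy => ENNReal.ofReal_le_ofReal (h y hy)

lemma gaussianReal_preimage_sub_const (μ x : ℝ) (v : ℝ≥0) {s : Set ℝ} (hs : MeasurableSet s) :
    gaussianReal μ v ((· - x) ⁻¹' s) = gaussianReal (μ - x) v s := by
  rw [← gaussianReal_map_sub_const, Measure.map_apply (by fun_prop) hs]

end ProbabilityTheory

lemma sqrt_two_div_pi_eq (s : ℝ) (hs : 0 < s) :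
    √(2 / Real.pi) = (√(2 * Real.pi * s ^ 2))⁻¹ * (2 * s) := by
  have hsqrt : √(2 / Real.pi) * √(2 * Real.pi) = 2 := by
    rw [← Real.sqrt_mul (by positivity), show 2 / Real.pi * (2 * Real.pi) = 2 ^ 2 by field_simp,
      Real.sqrt_sq zero_le_two]
  rw [Real.sqrt_mul' _ (sq_nonneg _), Real.sqrt_sq hs.le]
  field_simp
  linear_combination hsqrt

section Window

variable {σ : ℝ≥0} {α β x ε : ℝ}

lemma exp_mul_gaussianReal_le_of_le (hσ : 0 < σ) (hx : |x| ≤ α * σ)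
    (hεβ : ε ≤ β * σ) :
    ENNReal.ofReal (Real.exp (-α ^ 2 / 2 - α * β)) * gaussianReal 0 (σ ^ 2) {y : ℝ | |y| ≤ ε}
      ≤ gaussianReal 0 (σ ^ 2) {y : ℝ | |y - x| ≤ ε} := by
  have hv : σ ^ 2 ≠ 0 := by positivity
  obtain ⟨hxl, hxu⟩ := abs_le.mp hx
  rw [show {y : ℝ | |y - x| ≤ ε} = (· - x) ⁻¹' {y | |y| ≤ ε} from rfl,
    gaussianReal_preimage_sub_const _ _ _ (measurableSet_le (by fun_prop) measurable_const)]
  refine ofReal_mul_gaussianReal_le hv hv fun y hy => exp_mul_gaussianPDFReal_le ?_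
  obtain ⟨hyl, hyu⟩ := abs_le.mp (le_trans hy hεβ)
  rw [NNReal.coe_pow]
  nlinarith [mul_nonneg (sub_nonneg.2 hxu) (neg_le_iff_add_nonneg.1 hyl),
    mul_nonneg (neg_le_iff_add_nonneg.1 hxl) (sub_nonneg.2 hyu),
    mul_nonneg (sub_nonneg.2 hxu) (neg_le_iff_add_nonneg.1 hxl)]

lemma sqrt_two_div_pi_mul_exp_le_gaussianReal (hσ : 0 < σ) (hα : 0 < α) (hβ : 0 < β)
    (hx : |x| ≤ α * σ) (hεβ : β * σ < ε) :
    ENNReal.ofReal (√(2 / Real.pi) * β * Real.exp (-(α + β) ^ 2 / 2))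
      ≤ gaussianReal 0 (σ ^ 2) {y : ℝ | |y - x| ≤ ε} := by
  have hv : σ ^ 2 ≠ 0 := by positivity
  have hwindow : Set.Icc (x - β * σ) (x + β * σ) ⊆ {y : ℝ | |y - x| ≤ ε} := by
    intro y ⟨hyl, hyu⟩
    rw [Set.mem_ofPred_eq, abs_le]
    constructor <;> linarith
  calc ENNReal.ofReal (√(2 / Real.pi) * β * Real.exp (-(α + β) ^ 2 / 2))
      = ENNReal.ofReal ((√(2 * Real.pi * ↑(σ ^ 2)))⁻¹ * Real.exp (-(α + β) ^ 2 / 2)) *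
          volume (Set.Icc (x - β * σ) (x + β * σ)) := by
        rw [Real.volume_Icc, ← ENNReal.ofReal_mul (by positivity), NNReal.coe_pow,
          sqrt_two_div_pi_eq σ hσ]
        ring_nf
    _ ≤ gaussianReal 0 (σ ^ 2) (Set.Icc (x - β * σ) (x + β * σ)) := by
        refine ofReal_mul_volume_le_gaussianReal hv fun y hy => gaussianPDFReal_ge_of_sq_le ?_
        obtain ⟨hxl, hxu⟩ := abs_le.mp hx
        rw [NNReal.coe_pow, sub_zero, ← mul_pow, sq_le_sq,
          abs_of_pos (by positivity : 0 < (α + β) * (σ : ℝ))]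
        exact abs_le.mpr ⟨by nlinarith [hy.1], by nlinarith [hy.2]⟩
    _ ≤ _ := measure_mono hwindow

end Window

theorem stmt_10_general (σ : ℝ≥0) (hσ : 0 < σ) (α β : ℝ) (hα : 0 < α) (hβ : 0 < β)
    (x : ℝ) (hx : |x| ≤ α * σ) (ε : ℝ) :
    (ε ≤ β * σ →
      ENNReal.ofReal (Real.exp (-α ^ 2 / 2 - α * β)) *
          gaussianReal 0 (σ ^ 2) {y : ℝ | |y| ≤ ε}
        ≤ gaussianReal 0 (σ ^ 2) {y : ℝ | |y - x| ≤ ε}) ∧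
    (β * σ < ε →
      ENNReal.ofReal (Real.sqrt (2 / Real.pi) * β * Real.exp (-(α + β) ^ 2 / 2))
        ≤ gaussianReal 0 (σ ^ 2) {y : ℝ | |y - x| ≤ ε}) :=
  ⟨exp_mul_gaussianReal_le_of_le hσ hx, sqrt_two_div_pi_mul_exp_le_gaussianReal hσ hα hβ hx⟩

theorem stmt_10 (σ : ℝ≥0) (hσ : 0 < σ) (α β : ℝ) (hα : 0 < α) (hβ : 0 < β)
    (x : ℝ) (hx : |x| ≤ α * σ) (ε : ℝ) (hε : 0 < ε) :
    (ε ≤ β * σ →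
      ENNReal.ofReal (Real.exp (-α ^ 2 / 2 - α * β)) *
          gaussianReal 0 (σ ^ 2) {y : ℝ | |y| ≤ ε}
        ≤ gaussianReal 0 (σ ^ 2) {y : ℝ | |y - x| ≤ ε}) ∧
    (β * σ < ε →
      ENNReal.ofReal (Real.sqrt (2 / Real.pi) * β * Real.exp (-(α + β) ^ 2 / 2))
        ≤ gaussianReal 0 (σ ^ 2) {y : ℝ | |y - x| ≤ ε}) :=
  stmt_10_general σ hσ α β hα hβ x hx ε
end

section
/- Let Z_1, …, Z_n be linearly independent centered real Gaussian random variables and g: R → R_+ Borel measurable. Then ∫_{R^n} g(v_1)·exp(−½ Var(v·Z)) dv = (2π)^{(n−1)/2}·Q^{−1/2}·∫_{−∞}^{∞} g(z/σ_1)·e^{−z²/2} dz, where σ_1² = Var(Z_1 | Z_2, …, Z_n) and Q = det Cov(Z_1, …, Z_n). -/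
/-!
Factor the covariance matrix as `A = Bᵀ B` and substitute `w = B v`: the weight becomes the
standard Gaussian one, and `v₀` becomes the linear form `⟪u, w⟫` where `u` is the `0`-th row of
`B⁻¹`, so that `‖u‖² = (A⁻¹)₀₀`. A reflection turns `⟪u, w⟫` into `‖u‖ w₀`, after which the
integral splits into one-dimensional Gaussian integrals. On the probabilistic side, completing
the square shows that the residual of the best linear `L²` prediction of `Z₀` from the other
`Zᵢ` has variance `σ₁² = 1 / (A⁻¹)₀₀`, so `z / σ₁ = ‖u‖ z`.
-/

open MeasureTheory ProbabilityTheory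
open scoped BigOperators NNReal
open Matrix Real

def residualCoeffs {ι : Type*} [DecidableEq ι] (i₀ : ι) (α : {i // i ≠ i₀} → ℝ) : ι → ℝ :=
  fun j => if h : j = i₀ then 1 else -α ⟨j, h⟩

@[simp]
theorem residualCoeffs_self {ι : Type*} [DecidableEq ι] (i₀ : ι) (α : {i // i ≠ i₀} → ℝ) :
    residualCoeffs i₀ α i₀ = 1 :=
  dif_pos rfl

section

variable {ι : Type*} [Fintype ι]

theorem Matrix.sum_sum_mul_mul_eq_dotProduct_mulVec (A : Matrix ι ι ℝ) (v : ι → ℝ) :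
    ∑ i, ∑ j, v i * v j * A i j = v ⬝ᵥ A *ᵥ v := by
  simp only [dotProduct, mulVec, Finset.mul_sum]
  exact Finset.sum_congr rfl fun i _ => Finset.sum_congr rfl fun j _ => by ring

theorem integral_sq_sum_mul_eq_dotProduct_mulVec {Ω : Type*} [MeasurableSpace Ω] {μ : Measure Ω}
    {Z : ι → Ω → ℝ} (hZ : ∀ i, MemLp (Z i) 2 μ) (c : ι → ℝ) :
    ∫ ω, (∑ i, c i * Z i ω) ^ 2 ∂μ = c ⬝ᵥ (of fun i j => ∫ ω, Z i ω * Z j ω ∂μ) *ᵥ c := by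
  have hint : ∀ i j, Integrable (fun ω => c i * c j * (Z i ω * Z j ω)) μ :=
    fun i j => ((hZ i).integrable_mul (hZ j)).const_mul _
  have hexpand : ∀ ω, (∑ i, c i * Z i ω) ^ 2 = ∑ i, ∑ j, c i * c j * (Z i ω * Z j ω) := fun ω => by
    rw [sq, Finset.sum_mul_sum]
    exact Finset.sum_congr rfl fun i _ => Finset.sum_congr rfl fun j _ => by ring
  rw [← sum_sum_mul_mul_eq_dotProduct_mulVec]
  simp_rw [hexpand, of_apply, ← integral_const_mul]
  rw [integral_finsetSum _ fun i _ => integrable_finsetSum _ fun j _ => hint i j]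
  exact Finset.sum_congr rfl fun i _ => integral_finsetSum _ fun j _ => hint i j

variable [DecidableEq ι]

theorem sub_sum_eq_sum_residualCoeffs_mul (i₀ : ι) (α : {i // i ≠ i₀} → ℝ) (x : ι → ℝ) :
    x i₀ - ∑ i : {i // i ≠ i₀}, α i * x i = ∑ j, residualCoeffs i₀ α j * x j := by
  rw [Fintype.sum_eq_add_sum_subtype_ne _ i₀, residualCoeffs_self, one_mul, sub_eq_add_neg,
    ← Finset.sum_neg_distrib]
  congr 1
  exact Finset.sum_congr rfl fun j _ => by simp [residualCoeffs, j.2]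

theorem Matrix.PosDef.mulVec_inv_mulVec_single {A : Matrix ι ι ℝ} (hA : A.PosDef) (i₀ : ι) :
    A *ᵥ (A⁻¹ *ᵥ Pi.single i₀ 1) = Pi.single i₀ 1 := by
  rw [mulVec_mulVec, mul_nonsing_inv _ (isUnit_iff_ne_zero.mpr hA.det_pos.ne'), one_mulVec]

theorem Matrix.PosDef.inv_inv_apply_le_dotProduct_mulVec {A : Matrix ι ι ℝ} (hA : A.PosDef)
    {i₀ : ι} {c : ι → ℝ} (hc : c i₀ = 1) :
    (A⁻¹ i₀ i₀)⁻¹ ≤ c ⬝ᵥ A *ᵥ c := by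
  set r := A⁻¹ i₀ i₀
  set b := A⁻¹ *ᵥ Pi.single i₀ 1
  have hr : 0 < r := hA.inv.diag_pos
  have hAb : A *ᵥ b = Pi.single i₀ 1 := hA.mulVec_inv_mulVec_single i₀
  have hbi₀ : b i₀ = r := by simp [b, r, mulVec_single]
  have hsymm : Aᵀ = A := (conjTranspose_eq_transpose_of_trivial A).symm.trans hA.isHermitian
  have hbAc : b ⬝ᵥ A *ᵥ c = 1 := by
    rw [dotProduct_mulVec, ← mulVec_transpose, hsymm, hAb, single_one_dotProduct, hc]
  -- completing the square around the minimiser `r⁻¹ • b`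
  have hsq : (c - r⁻¹ • b) ⬝ᵥ A *ᵥ (c - r⁻¹ • b) = c ⬝ᵥ A *ᵥ c - r⁻¹ := by
    simp only [mulVec_sub, mulVec_smul, sub_dotProduct, dotProduct_sub, smul_dotProduct,
      dotProduct_smul, hbAc, hAb, dotProduct_single_one, Pi.sub_apply, Pi.smul_apply, hc, hbi₀,
      smul_eq_mul]
    field_simp
    ring
  have hnonneg := hA.posSemidef.dotProduct_mulVec_nonneg (c - r⁻¹ • b)
  rw [star_trivial, hsq] at hnonneg
  linarith

theorem Matrix.PosDef.iInf_residualCoeffs_dotProduct_mulVec {A : Matrix ι ι ℝ} (hA : A.PosDef)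
    (i₀ : ι) :
    ⨅ α, residualCoeffs i₀ α ⬝ᵥ A *ᵥ residualCoeffs i₀ α = (A⁻¹ i₀ i₀)⁻¹ := by
  set r := A⁻¹ i₀ i₀
  set b := A⁻¹ *ᵥ Pi.single i₀ 1
  have hr : 0 < r := hA.inv.diag_pos
  have hbi₀ : b i₀ = r := by simp [b, r, mulVec_single]
  have hlower : ∀ α, r⁻¹ ≤ residualCoeffs i₀ α ⬝ᵥ A *ᵥ residualCoeffs i₀ α :=
    fun α => hA.inv_inv_apply_le_dotProduct_mulVec (residualCoeffs_self i₀ α)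
  have hmin : residualCoeffs i₀ (fun j => -(r⁻¹ * b j)) = r⁻¹ • b := by
    ext j
    by_cases hj : j = i₀
    · subst hj; simp [hbi₀, hr.ne']
    · simp [residualCoeffs, hj]
  refine le_antisymm ?_ (le_ciInf hlower)
  refine (ciInf_le ⟨r⁻¹, Set.forall_mem_range.mpr hlower⟩ (fun j => -(r⁻¹ * b j))).trans_eq ?_
  rw [hmin, mulVec_smul, hA.mulVec_inv_mulVec_single, smul_dotProduct, dotProduct_smul,
    dotProduct_single_one, hbi₀, smul_eq_mul, smul_eq_mul]
  field_simp

open scoped MatrixOrder in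
theorem Matrix.PosDef.exists_eq_transpose_mul_self {A : Matrix ι ι ℝ} (hA : A.PosDef) :
    ∃ B : Matrix ι ι ℝ, A = Bᵀ * B := by
  obtain ⟨B, hB⟩ := CStarAlgebra.nonneg_iff_eq_star_mul_self.mp hA.posSemidef.nonneg
  exact ⟨B, by rwa [star_eq_conjTranspose, conjTranspose_eq_transpose_of_trivial] at hB⟩

theorem integral_comp_mulVec {E : Type*} [NormedAddCommGroup E] [NormedSpace ℝ E]
    {M : Matrix ι ι ℝ} (hM : M.det ≠ 0) (F : (ι → ℝ) → E) :
    ∫ v, F (M *ᵥ v) = |M.det|⁻¹ • ∫ w, F w := by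
  have hinj : Function.Injective (toLin' M) :=
    mulVec_injective_iff_isUnit.mpr ((isUnit_iff_isUnit_det M).mpr (Ne.isUnit hM))
  have hemb : MeasurableEmbedding (toLin' M) :=
    (LinearMap.isClosedEmbedding_of_injective (LinearMap.ker_eq_bot.mpr hinj)).measurableEmbedding
  have hcoef : |M.det|⁻¹ = (ENNReal.ofReal |M.det⁻¹|).toReal := by
    rw [ENNReal.toReal_ofReal (abs_nonneg _), abs_inv]
  rw [hcoef, ← integral_smul_measure, ← Real.map_matrix_volume_pi_eq_smul_volume_pi hM,
    hemb.integral_map]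
  rfl

theorem EuclideanSpace.integral_comp_inner {E : Type*} [NormedAddCommGroup E] [NormedSpace ℝ E]
    (u : EuclideanSpace ℝ ι) (i₀ : ι) (F : ℝ → ℝ → E) :
    ∫ w : EuclideanSpace ℝ ι, F (inner ℝ u w) ‖w‖ =
      ∫ w : EuclideanSpace ℝ ι, F (‖u‖ * w i₀) ‖w‖ := by
  set e := EuclideanSpace.single i₀ ‖u‖
  have hnorm : ‖u‖ = ‖e‖ := by simp [e]
  set R := Submodule.reflection (ℝ ∙ (u - e))ᗮ
  have hRu : R u = e := Submodule.reflection_sub hnorm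
  rw [← integral_comp R]
  congr 1 with w
  have hinner : inner ℝ u (R w) = ‖u‖ * w i₀ := by
    rw [← R.inner_map_map, Submodule.reflection_reflection, hRu, EuclideanSpace.inner_single_left]
    simp
  rw [hinner, R.norm_map]

theorem integral_apply_mul_prod {𝕜 : Type*} [RCLike 𝕜] (i₀ : ι) (G φ : ℝ → 𝕜) :
    ∫ y : ι → ℝ, G (y i₀) * ∏ i, φ (y i) =
      (∫ t, G t * φ t) * (∫ t, φ t) ^ (Fintype.card ι - 1) := by
  set F := Function.update (fun _ => φ) i₀ (G * φ)
  have hF : ∀ i : {i // i ≠ i₀}, F i = φ := fun i => Function.update_of_ne i.2 _ _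
  have hprod : ∀ y : ι → ℝ, G (y i₀) * ∏ i, φ (y i) = ∏ i, F i (y i) := fun y => by
    simp only [Fintype.prod_eq_mul_prod_subtype_ne _ i₀, hF, F, Function.update_self, Pi.mul_apply,
      mul_assoc]
  simp_rw [hprod]
  rw [volume_pi, integral_fintype_prod_eq_prod, Fintype.prod_eq_mul_prod_subtype_ne _ i₀]
  simp only [hF, F, Function.update_self, Pi.mul_apply, Finset.prod_const, Finset.card_univ,
    Fintype.card_subtype_compl, Fintype.card_unique]

theorem integral_exp_neg_half_sq : ∫ t : ℝ, exp (-(1 / 2) * t ^ 2) = √(2 * π) := by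
  rw [integral_gaussian]; congr 1; field_simp

theorem integral_comp_dotProduct_mul_gaussian [Nonempty ι] (u : ι → ℝ) (f : ℝ → ℝ) :
    ∫ w : ι → ℝ, f (u ⬝ᵥ w) * exp (-(1 / 2) * (w ⬝ᵥ w)) =
      √(2 * π) ^ (Fintype.card ι - 1) * ∫ t, f (√(u ⬝ᵥ u) * t) * exp (-(1 / 2) * t ^ 2) := by
  have hnorm : ∀ w : ι → ℝ, w ⬝ᵥ w = ‖WithLp.toLp 2 w‖ ^ 2 := fun w => by
    rw [EuclideanSpace.real_norm_sq_eq]; simp [dotProduct, sq]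
  have hsq : ∀ w : EuclideanSpace ℝ ι,
      exp (-(1 / 2) * ‖w‖ ^ 2) = ∏ i, exp (-(1 / 2) * w i ^ 2) := fun w => by
    rw [EuclideanSpace.real_norm_sq_eq, Finset.mul_sum, exp_sum]
  have hpres := EuclideanSpace.volume_preserving_symm_measurableEquiv_toLp ι
  calc ∫ w : ι → ℝ, f (u ⬝ᵥ w) * exp (-(1 / 2) * (w ⬝ᵥ w))
      = ∫ w : EuclideanSpace ℝ ι, f (inner ℝ (WithLp.toLp 2 u) w) * exp (-(1 / 2) * ‖w‖ ^ 2) := by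
        rw [← hpres.integral_comp']
        simp [hnorm, EuclideanSpace.inner_eq_star_dotProduct, dotProduct_comm]
    _ = ∫ w : EuclideanSpace ℝ ι,
          f (√(u ⬝ᵥ u) * w (Classical.arbitrary ι)) * exp (-(1 / 2) * ‖w‖ ^ 2) := by
        rw [EuclideanSpace.integral_comp_inner (WithLp.toLp 2 u) (Classical.arbitrary ι)
          (fun a b => f a * exp (-(1 / 2) * b ^ 2)), ← sqrt_sq (norm_nonneg _), ← hnorm]
    _ = ∫ w : ι → ℝ, f (√(u ⬝ᵥ u) * w (Classical.arbitrary ι)) * ∏ i, exp (-(1 / 2) * w i ^ 2) := by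
        rw [← hpres.integral_comp']
        congr 1 with w
        rw [hsq]
        rfl
    _ = _ := by
        rw [integral_apply_mul_prod (Classical.arbitrary ι) (fun t => f (√(u ⬝ᵥ u) * t))
          (fun t => exp (-(1 / 2) * t ^ 2)), integral_exp_neg_half_sq, mul_comm]

theorem Matrix.PosDef.integral_apply_mul_exp_neg_dotProduct_mulVec {A : Matrix ι ι ℝ}
    (hA : A.PosDef) (i₀ : ι) (g : ℝ → ℝ) :
    ∫ v : ι → ℝ, g (v i₀) * exp (-(1 / 2) * (v ⬝ᵥ A *ᵥ v)) =
      √(2 * π) ^ (Fintype.card ι - 1) * A.det ^ (-(1 / 2) : ℝ) *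
        ∫ t, g (√(A⁻¹ i₀ i₀) * t) * exp (-(1 / 2) * t ^ 2) := by
  have : Nonempty ι := ⟨i₀⟩
  obtain ⟨B, rfl⟩ := hA.exists_eq_transpose_mul_self
  have hdetB : B.det ≠ 0 := fun h => hA.det_pos.ne' (by rw [det_mul, det_transpose, h, mul_zero])
  set u : ι → ℝ := fun j => B⁻¹ i₀ j
  have hu : u ⬝ᵥ u = (Bᵀ * B)⁻¹ i₀ i₀ := by
    rw [mul_inv_rev, ← transpose_nonsing_inv, mul_apply]
    rfl
  have hdet : (Bᵀ * B).det ^ (-(1 / 2) : ℝ) = |B.det|⁻¹ := by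
    rw [det_mul, det_transpose, ← sq, ← sq_abs, ← rpow_natCast, ← rpow_mul (abs_nonneg _),
      show ((2 : ℕ) : ℝ) * -(1 / 2) = -1 by norm_num, rpow_neg_one]
  calc ∫ v : ι → ℝ, g (v i₀) * exp (-(1 / 2) * (v ⬝ᵥ (Bᵀ * B) *ᵥ v))
      = ∫ v, g (u ⬝ᵥ B *ᵥ v) * exp (-(1 / 2) * (B *ᵥ v ⬝ᵥ B *ᵥ v)) := by
        congr 1 with v
        have hv : u ⬝ᵥ B *ᵥ v = v i₀ := by
          change (B⁻¹ *ᵥ B *ᵥ v) i₀ = v i₀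
          rw [mulVec_mulVec, nonsing_inv_mul _ hdetB.isUnit, one_mulVec]
        rw [hv, ← mulVec_mulVec, dotProduct_mulVec, vecMul_transpose]
    _ = |B.det|⁻¹ * ∫ w, g (u ⬝ᵥ w) * exp (-(1 / 2) * (w ⬝ᵥ w)) :=
        integral_comp_mulVec hdetB fun w => g (u ⬝ᵥ w) * exp (-(1 / 2) * (w ⬝ᵥ w))
    _ = _ := by
        rw [integral_comp_dotProduct_mul_gaussian, hu, hdet]
        ring

end

theorem stmt_15_general {Ω : Type*} [MeasurableSpace Ω] (μ : Measure Ω)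
    (n : ℕ) (hn : 0 < n) (Z : Fin n → Ω → ℝ)
    (hL2 : ∀ i, MemLp (Z i) 2 μ)
    -- the `Z i` are linearly independent in `L²`, i.e. the covariance matrix is
    -- positive definite
    (hposdef : (Matrix.of fun i j : Fin n => ∫ ω, Z i ω * Z j ω ∂μ).PosDef)
    (g : ℝ → ℝ) :
    ∫ v : Fin n → ℝ,
        g (v ⟨0, hn⟩) *
          Real.exp (-(1 / 2) * ∑ i, ∑ j, v i * v j * ∫ ω, Z i ω * Z j ω ∂μ)
      = (2 * Real.pi) ^ (((n : ℝ) - 1) / 2) *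
        (Matrix.of fun i j : Fin n => ∫ ω, Z i ω * Z j ω ∂μ).det ^ (-(1 / 2) : ℝ) *
        ∫ z : ℝ,
          g (z / Real.sqrt
              (⨅ α : {i : Fin n // i ≠ ⟨0, hn⟩} → ℝ,
                ∫ ω, (Z ⟨0, hn⟩ ω - ∑ i : {i : Fin n // i ≠ ⟨0, hn⟩}, α i * Z i ω) ^ 2 ∂μ)) *
          Real.exp (-z ^ 2 / 2) := by
  set i₀ : Fin n := ⟨0, hn⟩
  set A : Matrix (Fin n) (Fin n) ℝ := Matrix.of fun i j : Fin n => ∫ ω, Z i ω * Z j ω ∂μ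
  have hσ : (⨅ α : {i : Fin n // i ≠ i₀} → ℝ,
      ∫ ω, (Z i₀ ω - ∑ i : {i : Fin n // i ≠ i₀}, α i * Z i ω) ^ 2 ∂μ) = (A⁻¹ i₀ i₀)⁻¹ := by
    have hres : ∀ α ω, Z i₀ ω - ∑ i : {i : Fin n // i ≠ i₀}, α i * Z i ω =
        ∑ j, residualCoeffs i₀ α j * Z j ω :=
      fun α ω => sub_sum_eq_sum_residualCoeffs_mul i₀ α fun i => Z i ω
    simp_rw [hres, integral_sq_sum_mul_eq_dotProduct_mulVec hL2]
    exact hposdef.iInf_residualCoeffs_dotProduct_mulVec i₀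
  have hpow : √(2 * π) ^ (n - 1) = (2 * π) ^ (((n : ℝ) - 1) / 2) := by
    rw [sqrt_eq_rpow, ← rpow_natCast, ← rpow_mul (by positivity), Nat.cast_sub hn]
    ring_nf
  have hquad : ∀ v : Fin n → ℝ, ∑ i, ∑ j, v i * v j * ∫ ω, Z i ω * Z j ω ∂μ = v ⬝ᵥ A *ᵥ v :=
    sum_sum_mul_mul_eq_dotProduct_mulVec A
  simp_rw [hquad]
  rw [hposdef.integral_apply_mul_exp_neg_dotProduct_mulVec, Fintype.card_fin, hpow, hσ]
  congr 2 with z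
  rw [sqrt_inv, div_inv_eq_mul, mul_comm z]
  ring_nf

theorem stmt_15 {Ω : Type*} [MeasurableSpace Ω] (μ : Measure Ω) [IsProbabilityMeasure μ]
    (n : ℕ) (hn : 0 < n) (Z : Fin n → Ω → ℝ)
    (hmeas : ∀ i, Measurable (Z i)) (hL2 : ∀ i, MemLp (Z i) 2 μ)
    -- `Z` is a centered Gaussian vector
    (hgauss : ∀ c : Fin n → ℝ, ∃ v : ℝ≥0,
      μ.map (fun ω => ∑ i, c i * Z i ω) = gaussianReal 0 v)
    -- the `Z i` are linearly independent in `L²`, i.e. the covariance matrix is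
    -- positive definite
    (hposdef : (Matrix.of fun i j : Fin n => ∫ ω, Z i ω * Z j ω ∂μ).PosDef)
    (g : ℝ → ℝ) (hg : Measurable g) (hg0 : ∀ x, 0 ≤ g x) :
    ∫ v : Fin n → ℝ,
        g (v ⟨0, hn⟩) *
          Real.exp (-(1 / 2) * ∑ i, ∑ j, v i * v j * ∫ ω, Z i ω * Z j ω ∂μ)
      = (2 * Real.pi) ^ (((n : ℝ) - 1) / 2) *
        (Matrix.of fun i j : Fin n => ∫ ω, Z i ω * Z j ω ∂μ).det ^ (-(1 / 2) : ℝ) *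
        ∫ z : ℝ,
          g (z / Real.sqrt
              (⨅ α : {i : Fin n // i ≠ ⟨0, hn⟩} → ℝ,
                ∫ ω, (Z ⟨0, hn⟩ ω - ∑ i : {i : Fin n // i ≠ ⟨0, hn⟩}, α i * Z i ω) ^ 2 ∂μ)) *
          Real.exp (-z ^ 2 / 2) :=
  stmt_15_general μ n hn Z hL2 hposdef g
end
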